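/- Let n = 1, a₁ = -1, a₂ < 0, a₃ = 1 (case DDF). Suppose φ ∈ H¹(ℝ)\{0} satisfies K(φ) = 0 and P(φ) = 0 where K(φ) = ‖φ'‖² + ‖φ‖³_{L³} - a₂‖φ‖⁴_{L⁴} - ‖φ‖⁵_{L⁵} and P(φ) = ‖φ'‖² + (1/6)‖φ‖³_{L³} - (a₂/4)‖φ‖⁴_{L⁴} - (3/10)‖φ‖⁵_{L⁵}. Then ∂²_λ S(φ^λ)|_{λ=1} = ‖φ'‖² - (1/12)‖φ‖³_{L³} - (3/20)‖φ‖⁵_{L⁵} = -(5/18)‖φ'‖² - (1/54)‖φ‖³_{L³} + (5a₂/72)‖φ‖⁴_{L⁴} < 0. -/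

import Mathlib

open MeasureTheory

noncomputable def gradSq1 (v : ℝ → ℝ) : ℝ := ∫ x, (deriv v x)^2

noncomputable def lp1 (p : ℕ) (v : ℝ → ℝ) : ℝ := ∫ x, |v x| ^ p

noncomputable def Kf1 (a₂ : ℝ) (v : ℝ → ℝ) : ℝ :=
  gradSq1 v + lp1 3 v - a₂ * lp1 4 v - lp1 5 v

noncomputable def Sf1 (a₂ : ℝ) (v : ℝ → ℝ) : ℝ :=
  (1/2) * gradSq1 v + (1/3) * lp1 3 v - (a₂/4) * lp1 4 v - (1/5) * lp1 5 v

noncomputable def Pf1 (a₂ : ℝ) (v : ℝ → ℝ) : ℝ :=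
  gradSq1 v + (1/6) * lp1 3 v - (a₂/4) * lp1 4 v - (3/10) * lp1 5 v

/-- The rescaling `v^λ(x) = λ^{1/2} v (λ x)` in dimension one. -/
noncomputable def scal1 (l : ℝ) (v : ℝ → ℝ) : ℝ → ℝ :=
  fun x => l ^ ((1:ℝ)/2) * v (l * x)

/-- `φ ∈ H¹(ℝ)` together with the integrabilities making the functionals
well defined. -/
def Adm1 (v : ℝ → ℝ) : Prop :=
  Differentiable ℝ v ∧ MemLp v 2 volume ∧ MemLp (deriv v) 2 volume ∧
    MemLp v 3 volume ∧ MemLp v 4 volume ∧ MemLp v 5 volume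

/-!
Under `v ↦ v^λ` the Dirichlet term scales like `λ²` and `‖v‖ₚᵖ` like `λ^{p/2 - 1}`, so near
`λ = 1` the map `λ ↦ S(v^λ)` is a linear combination of real powers of `λ`, whose second
derivative at `1` is read off termwise. The middle identity is a linear combination of
`K(φ) = 0` and `P(φ) = 0`. For the sign, `‖φ‖₃³ > 0` because `φ` is continuous and
nonzero, while `‖φ'‖² ≥ 0` and `a₂ ‖φ‖₄⁴ ≤ 0`.
-/

lemma rpow_half_pow {l : ℝ} (hl : 0 ≤ l) (n : ℕ) : (l ^ ((1:ℝ)/2)) ^ n = l ^ ((n:ℝ)/2) := by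
  rw [← Real.rpow_natCast, ← Real.rpow_mul hl]
  ring_nf

lemma deriv_scal1 (l : ℝ) (v : ℝ → ℝ) (x : ℝ) :
    deriv (scal1 l v) x = l ^ ((1:ℝ)/2) * (l * deriv v (l * x)) := by
  unfold scal1
  rw [deriv_const_mul_field, deriv_comp_mul_left, smul_eq_mul]

lemma gradSq1_scal1 (v : ℝ → ℝ) {l : ℝ} (hl : 0 < l) :
    gradSq1 (scal1 l v) = l ^ (2:ℝ) * gradSq1 v := by
  have hpt : ∀ x, deriv (scal1 l v) x ^ 2 = l ^ (3:ℝ) * deriv v (l * x) ^ 2 := by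
    intro x
    rw [deriv_scal1, mul_pow, mul_pow, rpow_half_pow hl.le, ← mul_assoc,
      ← Real.rpow_natCast l 2, ← Real.rpow_add hl]
    norm_num
  simp_rw [gradSq1, hpt]
  rw [integral_const_mul, Measure.integral_comp_mul_left (fun y => deriv v y ^ 2) l,
    smul_eq_mul, abs_inv, abs_of_pos hl, ← mul_assoc, ← Real.rpow_neg_one,
    ← Real.rpow_add hl]
  norm_num

lemma lp1_scal1 (v : ℝ → ℝ) (p : ℕ) {l : ℝ} (hl : 0 < l) :
    lp1 p (scal1 l v) = l ^ ((p:ℝ)/2 - 1) * lp1 p v := by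
  have hpt : ∀ x, |scal1 l v x| ^ p = l ^ ((p:ℝ)/2) * |v (l * x)| ^ p := by
    intro x
    rw [scal1, abs_mul, mul_pow, abs_of_nonneg (Real.rpow_nonneg hl.le _), rpow_half_pow hl.le]
  simp_rw [lp1, hpt]
  rw [integral_const_mul, Measure.integral_comp_mul_left (fun y => |v y| ^ p) l,
    smul_eq_mul, abs_inv, abs_of_pos hl, ← mul_assoc, ← Real.rpow_neg_one,
    ← Real.rpow_add hl, sub_eq_add_neg]

lemma Sf1_scal1 (a₂ : ℝ) (v : ℝ → ℝ) {l : ℝ} (hl : 0 < l) :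
    Sf1 a₂ (scal1 l v) = ∑ i, ![(1/2) * gradSq1 v, (1/3) * lp1 3 v, -(a₂/4) * lp1 4 v,
      -(1/5) * lp1 5 v] i * l ^ (![2, 1/2, 1, 3/2] : Fin 4 → ℝ) i := by
  rw [Sf1, gradSq1_scal1 v hl, lp1_scal1 v 3 hl, lp1_scal1 v 4 hl, lp1_scal1 v 5 hl]
  simp only [Fin.sum_univ_four, Matrix.cons_val]
  norm_num
  ring

section PowerSums

variable {ι : Type*} (s : Finset ι) (c p : ι → ℝ) {x : ℝ}

lemma hasDerivAt_sum_mul_rpow (hx : x ≠ 0) :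
    HasDerivAt (fun l => ∑ i ∈ s, c i * l ^ p i) (∑ i ∈ s, c i * p i * x ^ (p i - 1)) x := by
  simp only [mul_assoc]
  exact HasDerivAt.fun_sum fun i _ => (Real.hasDerivAt_rpow_const (Or.inl hx)).const_mul (c i)

lemma deriv_deriv_sum_mul_rpow (hx : x ≠ 0) :
    deriv (deriv fun l => ∑ i ∈ s, c i * l ^ p i) x
      = ∑ i ∈ s, c i * p i * (p i - 1) * x ^ (p i - 2) := by
  have hderiv : deriv (fun l => ∑ i ∈ s, c i * l ^ p i)
      =ᶠ[nhds x] fun l => ∑ i ∈ s, (c i * p i) * l ^ (p i - 1) := by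
    filter_upwards [isOpen_ne.mem_nhds hx] with l hl
    exact (hasDerivAt_sum_mul_rpow s c p hl).deriv
  rw [hderiv.deriv_eq, (hasDerivAt_sum_mul_rpow s (fun i => c i * p i) (fun i => p i - 1) hx).deriv]
  congr! 2 with i
  ring_nf

end PowerSums

lemma deriv_deriv_Sf1_scal1_one (a₂ : ℝ) (v : ℝ → ℝ) :
    deriv (deriv (fun l : ℝ => Sf1 a₂ (scal1 l v))) 1
      = gradSq1 v - (1/12) * lp1 3 v - (3/20) * lp1 5 v := by
  have hS : (fun l : ℝ => Sf1 a₂ (scal1 l v)) =ᶠ[nhds 1] _ :=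
    Filter.eventuallyEq_of_mem (Ioi_mem_nhds one_pos) fun l (hl : 0 < l) => Sf1_scal1 a₂ v hl
  rw [hS.deriv.deriv_eq]
  refine (deriv_deriv_sum_mul_rpow _ _ _ one_ne_zero).trans ?_
  simp only [Fin.sum_univ_four, Matrix.cons_val, Real.one_rpow]
  ring

lemma gradSq1_nonneg (v : ℝ → ℝ) : 0 ≤ gradSq1 v :=
  integral_nonneg fun _ => sq_nonneg _

lemma lp1_nonneg (p : ℕ) (v : ℝ → ℝ) : 0 ≤ lp1 p v :=
  integral_nonneg fun _ => pow_nonneg (abs_nonneg _) _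

lemma lp1_pos {p : ℕ} (hp : p ≠ 0) {v : ℝ → ℝ} (hc : Continuous v) (hv : MemLp v p)
    (h0 : v ≠ 0) : 0 < lp1 p v := by
  obtain ⟨x, hx⟩ := Function.ne_iff.1 h0
  exact integral_pos_of_integrable_nonneg_nonzero (hc.abs.pow p)
    (by simpa using hv.integrable_norm_pow hp) (fun _ => pow_nonneg (abs_nonneg _) _)
    (pow_ne_zero _ (abs_ne_zero.2 hx))

theorem stmt12 (a₂ : ℝ) (ha₂ : a₂ < 0) (φ : ℝ → ℝ)
    (hφ : Adm1 φ) (hφ0 : φ ≠ 0)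
    (hK : Kf1 a₂ φ = 0) (hP : Pf1 a₂ φ = 0) :
    deriv (deriv (fun l : ℝ => Sf1 a₂ (scal1 l φ))) 1
        = gradSq1 φ - (1/12) * lp1 3 φ - (3/20) * lp1 5 φ ∧
      gradSq1 φ - (1/12) * lp1 3 φ - (3/20) * lp1 5 φ
        = -(5/18) * gradSq1 φ - (1/54) * lp1 3 φ + (5*a₂/72) * lp1 4 φ ∧
      -(5/18) * gradSq1 φ - (1/54) * lp1 3 φ + (5*a₂/72) * lp1 4 φ < 0 := by
  obtain ⟨hd, -, -, h3, -, -⟩ := hφ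
  rw [Kf1] at hK
  rw [Pf1] at hP
  have h3pos : 0 < lp1 3 φ := lp1_pos three_ne_zero hd.continuous h3 hφ0
  have h4 : (5*a₂/72) * lp1 4 φ ≤ 0 :=
    mul_nonpos_of_nonpos_of_nonneg (by linarith) (lp1_nonneg 4 φ)
  refine ⟨deriv_deriv_Sf1_scal1_one a₂ φ, by linarith, ?_⟩
  linarith [gradSq1_nonneg φ]
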